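/- Let p be a prime, n a positive integer, and k an integer with 0 ≤ k ≤ n−1. The function u_k : Z_{p^n} → Z_{p^n} defined by u_k(x) = x^k if p divides x (i.e., x lies in the ideal of Z_{p^n} generated by p) and u_k(x) = 0 otherwise, is a polynomial function. -/

import Mathlib

/-! With `m = n · φ(pⁿ)`, every multiple of `p` in `ℤ/pⁿ` satisfies `xᵐ = 0` (since
`xⁿ = 0`) and every other element is a unit, so satisfies `xᵐ = 1` by Euler's theorem.
Hence `u_k` is the polynomial function `X ^ k - X ^ (k + m)`. -/

open Polynomial
open scoped Nat

theorem Polynomial.exists_eval_eq_ite_pow {R : Type*} [CommRing R] (S : Set R)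
    [DecidablePred (· ∈ S)] (m k : ℕ) (h_mem : ∀ x ∈ S, x ^ m = 0)
    (h_not_mem : ∀ x ∉ S, x ^ m = 1) :
    ∃ g : R[X], ∀ x, (if x ∈ S then x ^ k else 0) = g.eval x := by
  refine ⟨X ^ k - X ^ (k + m), fun x => ?_⟩
  by_cases hx : x ∈ S <;> simp [hx, pow_add, h_mem, h_not_mem]

namespace ZMod

variable {p n : ℕ} {x : ZMod (p ^ n)}

theorem pow_eq_zero_of_mem_span_natCast (hx : x ∈ Ideal.span {(p : ZMod (p ^ n))}) :
    x ^ n = 0 := by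
  obtain ⟨y, rfl⟩ := Ideal.mem_span_singleton.mp hx
  rw [mul_pow, ← Nat.cast_pow, natCast_self, zero_mul]

theorem isUnit_of_notMem_span_natCast (hp : p.Prime)
    (hx : x ∉ Ideal.span {(p : ZMod (p ^ n))}) : IsUnit x := by
  have : NeZero (p ^ n) := ⟨pow_ne_zero n hp.ne_zero⟩
  rw [← natCast_zmod_val x, isUnit_iff_coprime]
  refine (hp.coprime_iff_not_dvd.mpr fun hdvd => hx ?_).symm.pow_right n
  rw [Ideal.mem_span_singleton, ← natCast_zmod_val x]
  exact Nat.cast_dvd_cast hdvd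

theorem pow_totient_of_isUnit {m : ℕ} {x : ZMod m} (hx : IsUnit x) : x ^ φ m = 1 := by
  obtain ⟨u, rfl⟩ := hx
  rw [← Units.val_pow_eq_pow_val, pow_totient, Units.val_one]

end ZMod

open scoped Classical in
theorem uk_is_poly_fun_general (p n k : ℕ) (hp : p.Prime) :
    ∃ g : Polynomial (ZMod (p ^ n)), ∀ x : ZMod (p ^ n),
      (if x ∈ Ideal.span {(p : ZMod (p ^ n))} then x ^ k else 0) = g.eval x := by
  have h_totient : φ (p ^ n) ≠ 0 := (Nat.totient_pos.mpr (pow_pos hp.pos n)).ne'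
  refine exists_eval_eq_ite_pow _ (n * φ (p ^ n)) k (fun x hx => ?_) (fun x hx => ?_)
  · rw [pow_mul, ZMod.pow_eq_zero_of_mem_span_natCast hx, zero_pow h_totient]
  · rw [mul_comm, pow_mul, ZMod.pow_totient_of_isUnit (ZMod.isUnit_of_notMem_span_natCast hp hx),
      one_pow]

open scoped Classical in
theorem uk_is_poly_fun (p n k : ℕ) (hp : p.Prime) (hn : 0 < n) (hk : k ≤ n - 1) :
    ∃ g : Polynomial (ZMod (p ^ n)), ∀ x : ZMod (p ^ n),
      (if x ∈ Ideal.span {(p : ZMod (p ^ n))} then x ^ k else 0) = g.eval x :=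
  uk_is_poly_fun_general p n k hp
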